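/- arXiv:2406.02862 — 3 statements merged into one kernel-verified Lean document; each statement's English description precedes it below -/
import Mathlib

section
/- Let $\{\tilde{y}_i\}_{i=1}^{n}$ be probability vectors in $\mathbb{R}^C$ such that for every category $c \in \{1,\dots,C\}$ the normalizer $\sum_{i=1}^n \tilde{y}_{i,c}$ is positive and the prediction mean $m_c = \frac{1}{\sum_i \tilde{y}_{i,c}} \sum_i \tilde{y}_{i,c} \tilde{y}_i$ equals $e_c$. Then every $\tilde{y}_i$ is a one-hot vector, i.e., for each $i$ there exists $k$ with $\tilde{y}_i = e_k$. -/
/-- If for every category the prediction mean equals the corresponding one-hot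
vector, then every prediction is a one-hot vector. -/
theorem all_prediction_means_onehot_imp_onehot
    (n C : ℕ) (y : Fin n → Fin C → ℝ)
    (hnonneg : ∀ i j, 0 ≤ y i j)
    (hprob : ∀ i, ∑ j, y i j = 1)
    (hpos : ∀ c : Fin C, 0 < ∑ i, y i c)
    (hmean : ∀ c : Fin C,
      (fun j => (∑ i, y i c)⁻¹ * ∑ i, y i c * y i j)
        = fun j => if j = c then (1 : ℝ) else 0) :
    ∀ i, ∃ k : Fin C, y i = fun j => if j = k then (1 : ℝ) else 0 := by
  -- Key: for j ≠ c, every y i c * y i j = 0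
  have key : ∀ c j : Fin C, j ≠ c → ∀ i, y i c * y i j = 0 := by
    intro c j hjc i
    have h1 := congrFun (hmean c) j
    simp only [if_neg hjc] at h1
    have hinv : (∑ i, y i c)⁻¹ ≠ 0 := inv_ne_zero (ne_of_gt (hpos c))
    have hsum : ∑ i, y i c * y i j = 0 := by
      rcases mul_eq_zero.mp h1 with h | h
      · exact absurd h hinv
      · exact h
    have := (Finset.sum_eq_zero_iff_of_nonneg
      (fun i _ => mul_nonneg (hnonneg i c) (hnonneg i j))).mp hsum
    exact this i (Finset.mem_univ i)
  intro i
  -- there exists k with y i k ≠ 0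
  have hex : ∃ k : Fin C, y i k ≠ 0 := by
    by_contra h
    push_neg at h
    have : ∑ j, y i j = 0 := Finset.sum_eq_zero (fun j _ => h j)
    rw [hprob i] at this
    norm_num at this
  obtain ⟨k, hk⟩ := hex
  refine ⟨k, funext fun j => ?_⟩
  by_cases hjk : j = k
  · subst hjk
    simp only [if_pos rfl]
    have : ∑ j', y i j' = y i j := by
      apply Finset.sum_eq_single
      · intro b _ hb
        have := key j b hb i
        rcases mul_eq_zero.mp this with h | h
        · exact absurd h hk
        · exact h
      · intro h; exact absurd (Finset.mem_univ j) h
    rw [← this, hprob i]; simp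
  · simp only [if_neg hjk]
    have := key k j hjk i
    rcases mul_eq_zero.mp this with h | h
    · exact absurd h hk
    · exact h
end

section
/- Let $\{\tilde{y}_i\}_{i=1}^{n_u}$ be probability vectors in $\mathbb{R}^C$ with strictly positive entries, and for each category $c$ let $m_c = \frac{1}{\sum_i \tilde{y}_{i,c}} \sum_i \tilde{y}_{i,c} \tilde{y}_i$ be the prediction mean and define the cross-entropy label-encoding risk term $\mathcal{L}(m_c, e_c) = -\ln(m_{c,c})$. If the inequality $\frac{1}{n_u}\sum_{c=1}^C \left(\sum_{j=1}^{n_u} \tilde{y}_{j,c}\right) \mathcal{L}(m_c, e_c) \ge \frac{1}{C}\sum_{c=1}^C \mathcal{L}(m_c, e_c)$ holds, then $\frac{1}{C}\sum_{c=1}^C \mathcal{L}(m_c, e_c) \le -\frac{1}{n_u}\sum_{i=1}^{n_u}\sum_{c=1}^{C} \tilde{y}_{i,c} \ln \tilde{y}_{i,c}$, i.e., the label-encoding risk is upper-bounded by the average entropy of the predicted distributions. -/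
/-- Theorem 3: with the cross-entropy loss, the label-encoding risk is
upper-bounded by the entropy regularizer, under the weighting assumption. -/
theorem label_encoding_risk_le_entropy
    (n C : ℕ) (hn : 0 < n)
    (y : Fin n → Fin C → ℝ)
    (hpos : ∀ i j, 0 < y i j)
    (hprob : ∀ i, ∑ j, y i j = 1)
    (m : Fin C → Fin C → ℝ)
    (hm : ∀ c j, m c j = (∑ i, y i c)⁻¹ * ∑ i, y i c * y i j)
    (hassump : (1 / (n : ℝ)) * ∑ c, (∑ j, y j c) * (-Real.log (m c c))
      ≥ (1 / (C : ℝ)) * ∑ c, (-Real.log (m c c))) :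
    (1 / (C : ℝ)) * ∑ c, (-Real.log (m c c))
      ≤ -(1 / (n : ℝ)) * ∑ i, ∑ c, y i c * Real.log (y i c) := by
  refine le_trans hassump ?_
  have hn' : (0:ℝ) < (n:ℝ) := by exact_mod_cast hn
  have key : ∀ c : Fin C, (∑ j, y j c) * (-Real.log (m c c))
      ≤ ∑ i, -(y i c * Real.log (y i c)) := by
    intro c
    set S : ℝ := ∑ i, y i c with hS
    have hSpos : 0 < S := Finset.sum_pos (fun i _ => hpos i c) ⟨⟨0, hn⟩, Finset.mem_univ _⟩
    have hw : ∀ i ∈ Finset.univ, (0:ℝ) ≤ y i c / S := fun i _ =>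
      div_nonneg (hpos i c).le hSpos.le
    have hw1 : ∑ i, y i c / S = 1 := by
      rw [← Finset.sum_div, ← hS, div_self hSpos.ne']
    have hmem : ∀ i ∈ Finset.univ, y i c ∈ Set.Ioi (0:ℝ) := fun i _ => hpos i c
    have hjen := (strictConcaveOn_log_Ioi.concaveOn).le_map_sum hw hw1 hmem
    simp only [smul_eq_mul] at hjen
    have hsum : ∑ i, (y i c / S) * y i c = m c c := by
      rw [hm c c]
      rw [Finset.mul_sum]
      refine Finset.sum_congr rfl fun i _ => ?_
      rw [← hS]
      field_simp
    rw [hsum] at hjen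
    -- hjen : ∑ i, (y i c / S) * log (y i c) ≤ log (m c c)
    have h2 : ∑ i, y i c * Real.log (y i c) ≤ S * Real.log (m c c) := by
      have := mul_le_mul_of_nonneg_left hjen hSpos.le
      rw [Finset.mul_sum] at this
      calc ∑ i, y i c * Real.log (y i c)
          = ∑ i, S * ((y i c / S) * Real.log (y i c)) := by
            refine Finset.sum_congr rfl fun i _ => ?_
            field_simp
        _ ≤ S * Real.log (m c c) := this
    have : -(S * Real.log (m c c)) ≤ -(∑ i, y i c * Real.log (y i c)) := neg_le_neg h2
    calc S * (-Real.log (m c c)) = -(S * Real.log (m c c)) := by ring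
      _ ≤ -(∑ i, y i c * Real.log (y i c)) := this
      _ = ∑ i, -(y i c * Real.log (y i c)) := by rw [Finset.sum_neg_distrib]
  have hsumle : ∑ c, (∑ j, y j c) * (-Real.log (m c c))
      ≤ ∑ c, ∑ i, -(y i c * Real.log (y i c)) :=
    Finset.sum_le_sum fun c _ => key c
  have hswap : ∑ c : Fin C, ∑ i, -(y i c * Real.log (y i c))
      = -∑ i, ∑ c, y i c * Real.log (y i c) := by
    rw [Finset.sum_comm]
    simp [Finset.sum_neg_distrib]
  calc (1 / (n:ℝ)) * ∑ c, (∑ j, y j c) * (-Real.log (m c c))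
      ≤ (1 / (n:ℝ)) * ∑ c, ∑ i, -(y i c * Real.log (y i c)) := by
        apply mul_le_mul_of_nonneg_left hsumle
        positivity
    _ = -(1 / (n:ℝ)) * ∑ i, ∑ c, y i c * Real.log (y i c) := by
        rw [hswap]; ring
end

section
/- Let $\{\tilde{y}_i\}_{i=1}^n$ be probability vectors in $\mathbb{R}^C$ with, for each category $c$, $\sum_i \tilde{y}_{i,c} > 0$. Then the $\ell_1$ label-encoding risk satisfies $\frac{1}{C}\sum_{c=1}^C \|m_c - e_c\|_1 = \frac{2}{C}\sum_{c=1}^C \left(1 - \frac{\sum_i \tilde{y}_{i,c}^2}{\sum_i \tilde{y}_{i,c}}\right)$, and this quantity is zero if and only if for every $c$ and every $i$, $\tilde{y}_{i,c} \in \{0,1\}$. -/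
/-- Closed form of the ℓ₁ label-encoding risk and its vanishing
characterization. -/
theorem l1_label_encoding_risk_eq_and_zero_iff
    (n C : ℕ)
    (y : Fin n → Fin C → ℝ)
    (hnonneg : ∀ i j, 0 ≤ y i j)
    (hprob : ∀ i, ∑ j, y i j = 1)
    (hpos : ∀ c : Fin C, 0 < ∑ i, y i c)
    (m : Fin C → Fin C → ℝ)
    (hm : ∀ c j, m c j = (∑ i, y i c)⁻¹ * ∑ i, y i c * y i j) :
    (1 / (C : ℝ)) * ∑ c, (∑ j, |m c j - (if j = c then (1 : ℝ) else 0)|)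
      = (2 / (C : ℝ)) * ∑ c, (1 - (∑ i, (y i c) ^ 2) / (∑ i, y i c)) ∧
    ((1 / (C : ℝ)) * ∑ c, (∑ j, |m c j - (if j = c then (1 : ℝ) else 0)|) = 0 ↔
      ∀ (c : Fin C) (i : Fin n), y i c = 0 ∨ y i c = 1) := by
  have hmnonneg : ∀ c j, 0 ≤ m c j := by
    intro c j
    rw [hm]
    exact mul_nonneg (inv_nonneg.2 (hpos c).le)
      (Finset.sum_nonneg fun i _ => mul_nonneg (hnonneg i c) (hnonneg i j))
  have hle1 : ∀ i j, y i j ≤ 1 := by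
    intro i j
    calc y i j ≤ ∑ j', y i j' :=
          Finset.single_le_sum (fun j' _ => hnonneg i j') (Finset.mem_univ j)
      _ = 1 := hprob i
  have hsum_m : ∀ c, ∑ j, m c j = 1 := by
    intro c
    simp only [hm]
    rw [← Finset.mul_sum, Finset.sum_comm]
    have h1 : ∑ i, ∑ j, y i c * y i j = ∑ i, y i c := by
      refine Finset.sum_congr rfl fun i _ => ?_
      rw [← Finset.mul_sum, hprob i, mul_one]
    rw [h1, inv_mul_cancel₀ (hpos c).ne']
  have hmcc : ∀ c, m c c = (∑ i, (y i c) ^ 2) / (∑ i, y i c) := by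
    intro c
    rw [hm, div_eq_inv_mul]
    congr 1
    exact Finset.sum_congr rfl fun i _ => by ring
  have hsqle : ∀ c, ∑ i, (y i c) ^ 2 ≤ ∑ i, y i c := by
    intro c
    exact Finset.sum_le_sum fun i _ => by nlinarith [hnonneg i c, hle1 i c]
  have hmcc_le : ∀ c, m c c ≤ 1 := by
    intro c
    rw [hmcc, div_le_one (hpos c)]
    exact hsqle c
  have hinner : ∀ c, ∑ j, |m c j - (if j = c then (1 : ℝ) else 0)|
      = 2 * (1 - m c c) := by
    intro c
    rw [← Finset.add_sum_erase _ _ (Finset.mem_univ c)]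
    have h2 : ∑ j ∈ Finset.univ.erase c, |m c j - if j = c then (1:ℝ) else 0|
        = ∑ j ∈ Finset.univ.erase c, m c j := by
      refine Finset.sum_congr rfl fun j hj => ?_
      rw [if_neg (Finset.ne_of_mem_erase hj), sub_zero, abs_of_nonneg (hmnonneg c j)]
    have h3 : m c c + ∑ j ∈ Finset.univ.erase c, m c j = 1 := by
      rw [Finset.add_sum_erase _ _ (Finset.mem_univ c), hsum_m c]
    rw [h2, if_pos rfl, abs_of_nonpos (by linarith [hmcc_le c])]
    linarith
  have heq : (1 / (C : ℝ)) * ∑ c, (∑ j, |m c j - (if j = c then (1 : ℝ) else 0)|)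
      = (2 / (C : ℝ)) * ∑ c, (1 - (∑ i, (y i c) ^ 2) / (∑ i, y i c)) := by
    have e1 : ∑ c, (∑ j, |m c j - (if j = c then (1 : ℝ) else 0)|)
        = ∑ c, 2 * (1 - (∑ i, (y i c) ^ 2) / (∑ i, y i c)) := by
      refine Finset.sum_congr rfl fun c _ => ?_
      rw [hinner c, hmcc c]
    rw [e1, ← Finset.mul_sum]
    ring
  refine ⟨heq, ?_⟩
  rw [heq]
  rcases Nat.eq_zero_or_pos C with hC | hC
  · subst hC
    simp only [Finset.univ_eq_empty, Finset.sum_empty, mul_zero]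
    exact ⟨fun _ c => c.elim0, fun _ => trivial⟩
  · have h2C : (2 / (C : ℝ)) ≠ 0 := by
      apply div_ne_zero two_ne_zero
      exact_mod_cast hC.ne'
    have hterm : ∀ c : Fin C, 0 ≤ 1 - (∑ i, (y i c) ^ 2) / (∑ i, y i c) := by
      intro c
      have := hmcc_le c
      rw [hmcc c] at this
      linarith
    constructor
    · intro h c i
      have hsum0 : ∑ c, (1 - (∑ i, (y i c) ^ 2) / (∑ i, y i c)) = 0 :=
        (mul_eq_zero.1 h).resolve_left h2C
      have hc0 := (Finset.sum_eq_zero_iff_of_nonneg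
        (fun c _ => hterm c)).1 hsum0 c (Finset.mem_univ c)
      have hsq : ∑ i, (y i c) ^ 2 = ∑ i, y i c := by
        have h1 : (∑ i, (y i c) ^ 2) / (∑ i, y i c) = 1 := by linarith
        exact (div_eq_one_iff_eq (hpos c).ne').1 h1
      have hdiff : ∑ i, (y i c - (y i c) ^ 2) = 0 := by
        rw [Finset.sum_sub_distrib, hsq, sub_self]
      have hi := (Finset.sum_eq_zero_iff_of_nonneg
        (fun i _ => by nlinarith [hnonneg i c, hle1 i c])).1 hdiff i (Finset.mem_univ i)
      have : y i c * (1 - y i c) = 0 := by nlinarith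
      rcases mul_eq_zero.1 this with h' | h'
      · exact Or.inl h'
      · exact Or.inr (by linarith)
    · intro h
      have : ∑ c, (1 - (∑ i, (y i c) ^ 2) / (∑ i, y i c)) = 0 := by
        refine Finset.sum_eq_zero fun c _ => ?_
        have hsq : ∑ i, (y i c) ^ 2 = ∑ i, y i c := by
          refine Finset.sum_congr rfl fun i _ => ?_
          rcases h c i with h' | h' <;> rw [h'] <;> ring
        rw [hsq, div_self (hpos c).ne', sub_self]
      rw [this, mul_zero]
end
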